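/- If D is a condensed integral domain and a, b are nonzero nonunits of D with aD ∩ bD = abD, then (a,b) = D. -/
import Mathlib


/-- An integral domain is condensed if for every pair of nonzero ideals `I, J`,
the product `I*J` equals the set of products `{i*j : i ∈ I, j ∈ J}`. -/
def IsCondensed (D : Type*) [CommRing D] : Prop :=
  ∀ I J : Ideal D, I ≠ ⊥ → J ≠ ⊥ → ∀ x ∈ I * J, ∃ i ∈ I, ∃ j ∈ J, x = i * j

theorem stmt2 (D : Type*) [CommRing D] [IsDomain D] (hD : IsCondensed D)
    (a b : D) (ha0 : a ≠ 0) (hb0 : b ≠ 0) (ha : ¬ IsUnit a) (hb : ¬ IsUnit b)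
    (hint : Ideal.span {a} ⊓ Ideal.span {b} = Ideal.span {a * b}) :
    Ideal.span {a, b} = ⊤ := by
  have hab0 : a * b ≠ 0 := mul_ne_zero ha0 hb0
  -- cancellation lemma: if b ∣ a*z then b ∣ z
  have hdvdb : ∀ z : D, b ∣ a * z → b ∣ z := by
    intro z hz
    have h1 : a * z ∈ Ideal.span {a} ⊓ Ideal.span {b} :=
      Submodule.mem_inf.mpr ⟨Ideal.mem_span_singleton.mpr ⟨z, rfl⟩,
        Ideal.mem_span_singleton.mpr hz⟩
    rw [hint, Ideal.mem_span_singleton] at h1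
    obtain ⟨c, hc⟩ := h1
    exact ⟨c, mul_left_cancel₀ ha0 (by linear_combination hc)⟩
  -- cancellation lemma: if a ∣ b*z then a ∣ z
  have hdvda : ∀ z : D, a ∣ b * z → a ∣ z := by
    intro z hz
    have h1 : b * z ∈ Ideal.span {a} ⊓ Ideal.span {b} :=
      Submodule.mem_inf.mpr ⟨Ideal.mem_span_singleton.mpr hz,
        Ideal.mem_span_singleton.mpr ⟨z, rfl⟩⟩
    rw [hint, Ideal.mem_span_singleton] at h1
    obtain ⟨c, hc⟩ := h1
    exact ⟨c, mul_left_cancel₀ hb0 (by linear_combination hc)⟩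
  have hI : Ideal.span {a^2, b} ≠ ⊥ := by
    intro h
    have hbI : b ∈ Ideal.span {a^2, b} := Ideal.subset_span (by simp)
    rw [h, Ideal.mem_bot] at hbI
    exact hb0 hbI
  have hJ : Ideal.span {a, b^2} ≠ ⊥ := by
    intro h
    have haJ : a ∈ Ideal.span {a, b^2} := Ideal.subset_span (by simp)
    rw [h, Ideal.mem_bot] at haJ
    exact ha0 haJ
  have hx : a^3 + b^3 ∈ Ideal.span {a^2, b} * Ideal.span {a, b^2} := by
    have h1 : a^2 * a ∈ Ideal.span {a^2, b} * Ideal.span {a, b^2} :=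
      Ideal.mul_mem_mul (Ideal.subset_span (by simp)) (Ideal.subset_span (by simp))
    have h2 : b * b^2 ∈ Ideal.span {a^2, b} * Ideal.span {a, b^2} :=
      Ideal.mul_mem_mul (Ideal.subset_span (by simp)) (Ideal.subset_span (by simp))
    have heq : a^3 + b^3 = a^2 * a + b * b^2 := by ring
    rw [heq]
    exact add_mem h1 h2
  obtain ⟨i, hi, j, hj, hij⟩ := hD _ _ hI hJ _ hx
  obtain ⟨α, β, hi'⟩ := Ideal.mem_span_pair.mp hi
  obtain ⟨δ, γ, hj'⟩ := Ideal.mem_span_pair.mp hj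
  rw [← hi', ← hj'] at hij
  -- hij : a^3 + b^3 = (α*a^2 + β*b) * (δ*a + γ*b^2)
  have hbt : b ∣ 1 - α * δ := by
    apply hdvdb
    apply hdvdb
    apply hdvdb
    exact ⟨α*γ*a^2*b + β*δ*a + (β*γ - 1)*b^2, by linear_combination hij⟩
  have hsa : a ∣ 1 - β * γ := by
    apply hdvda
    apply hdvda
    apply hdvda
    exact ⟨α*δ*a^2 - a^2 + α*γ*a*b^2 + β*δ*b, by linear_combination hij⟩
  obtain ⟨t, ht⟩ := hbt
  obtain ⟨s, hs⟩ := hsa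
  have key : β * δ = a^2*t + b^2*s - α*γ*(a*b) :=
    mul_left_cancel₀ hab0 (show a*b*(β*δ) = a*b*(a^2*t + b^2*s - α*γ*(a*b)) by
      linear_combination (-1 : D) * hij + a^3 * ht + b^3 * hs)
  rw [Ideal.eq_top_iff_one]
  refine Ideal.mem_span_pair.mpr ⟨s - b*s*t + α*γ*a*t - (α*γ)^2*b, t + α*γ*b*s, ?_⟩
  linear_combination (-(β*γ)) * ht + (b*t - 1) * hs + (-(α*γ)) * key
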